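/- Let d ≥ 1, n₁,…,n_{d+1} ≥ 1, and F = ℝ or ℂ. Then β((n₁,…,n_{d+1}),F) ≥ β((n₁,…,n_d),F)/√(n_{d+1}) and α((n₁,…,n_{d+1}),F) ≤ √(n_{d+1})·α((n₁,…,n_d),F). -/

import Mathlib

/-!
Cut a tensor `T` of format `(n₁, …, n_{d+1})` into its slices `T₁, …, T_ν` along the last mode,
`ν = n_{d+1}`, so that `‖T‖² = ∑ ‖T_k‖²`. Pairing `T` with `x ⊗ e_k` is pairing `T_k` with `x`,
hence `‖T‖_∞ ≥ ‖T_k‖_∞ ≥ β ‖T_k‖`, and the slice of largest norm has `‖T_k‖ ≥ ‖T‖ / √ν`.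
Dually `T = ∑ₖ T_k ⊗ e_k` with `‖T_k ⊗ e_k‖₁ ≤ ‖T_k‖₁ ≤ α ‖T_k‖`, and Cauchy–Schwarz gives
`∑ ‖T_k‖ ≤ √ν ‖T‖`.
-/

noncomputable section


/-- The Euclidean norm of a vector in `𝕜^k`. -/
def vnorm {𝕜 : Type*} [RCLike 𝕜] {k : ℕ} (x : Fin k → 𝕜) : ℝ :=
  Real.sqrt (∑ i, ‖x i‖ ^ 2)

/-- The rank-one tensor `x₁ ⊗ ⋯ ⊗ x_d`. -/
def rankOne {𝕜 : Type*} [RCLike 𝕜] {d : ℕ} {n : Fin d → ℕ}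
    (x : ∀ j, Fin (n j) → 𝕜) : (∀ j, Fin (n j)) → 𝕜 :=
  fun i => ∏ j, x j (i j)

/-- The standard inner product `⟨T, Y⟩ = ∑ tᵢ · conj yᵢ` of tensors. -/
def tinner {𝕜 : Type*} [RCLike 𝕜] {d : ℕ} {n : Fin d → ℕ}
    (T Y : (∀ j, Fin (n j)) → 𝕜) : 𝕜 :=
  ∑ i, T i * (starRingEnd 𝕜) (Y i)

/-- The Hilbert–Schmidt norm of a tensor. -/
def hsNorm {𝕜 : Type*} [RCLike 𝕜] {d : ℕ} {n : Fin d → ℕ}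
    (T : (∀ j, Fin (n j)) → 𝕜) : ℝ :=
  Real.sqrt (∑ i, ‖T i‖ ^ 2)

/-- The spectral norm of a tensor:
`max {|⟨T, x₁⊗⋯⊗x_d⟩| : ‖x_j‖ = 1 for all j}`. -/
def specNorm {𝕜 : Type*} [RCLike 𝕜] {d : ℕ} {n : Fin d → ℕ}
    (T : (∀ j, Fin (n j)) → 𝕜) : ℝ :=
  sSup {r : ℝ | ∃ x : ∀ j, Fin (n j) → 𝕜, (∀ j, vnorm (x j) = 1) ∧
    r = ‖tinner T (rankOne x)‖}

/-- The nuclear norm of a tensor: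
`min {∑ᵢ ∏ⱼ ‖x_{i,j}‖ : T = ∑ᵢ x_{i,1}⊗⋯⊗x_{i,d}}`. -/
def nucNorm {𝕜 : Type*} [RCLike 𝕜] {d : ℕ} {n : Fin d → ℕ}
    (T : (∀ j, Fin (n j)) → 𝕜) : ℝ :=
  sInf {r : ℝ | ∃ (m : ℕ) (x : Fin m → ∀ j, Fin (n j) → 𝕜),
    T = (∑ i, rankOne (x i)) ∧ r = ∑ i, ∏ j, vnorm (x i j)}

/-- `α(n, 𝕜)`: the maximal nuclear norm of a tensor of Hilbert–Schmidt norm one. -/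
def alphaN (𝕜 : Type*) [RCLike 𝕜] (d : ℕ) (n : Fin d → ℕ) : ℝ :=
  sSup {r : ℝ | ∃ T : (∀ j, Fin (n j)) → 𝕜, hsNorm T = 1 ∧ r = nucNorm T}

/-- `β(n, 𝕜)`: the minimal spectral norm of a tensor of Hilbert–Schmidt norm one. -/
def betaN (𝕜 : Type*) [RCLike 𝕜] (d : ℕ) (n : Fin d → ℕ) : ℝ :=
  sInf {r : ℝ | ∃ T : (∀ j, Fin (n j)) → 𝕜, hsNorm T = 1 ∧ r = specNorm T}

open Finset

section

variable {𝕜 : Type*} [RCLike 𝕜]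

lemma vnorm_eq_norm {k : ℕ} (x : Fin k → 𝕜) :
    vnorm x = ‖(WithLp.toLp 2 x : EuclideanSpace 𝕜 (Fin k))‖ := by
  rw [EuclideanSpace.norm_eq]; rfl

lemma vnorm_nonneg {k : ℕ} (x : Fin k → 𝕜) : 0 ≤ vnorm x := Real.sqrt_nonneg _

lemma vnorm_smul {k : ℕ} (c : 𝕜) (x : Fin k → 𝕜) : vnorm (c • x) = ‖c‖ * vnorm x := by
  simp only [vnorm_eq_norm, WithLp.toLp_smul, norm_smul]

lemma vnorm_single {k : ℕ} (a : Fin k) : vnorm (Pi.single a (1 : 𝕜)) = 1 := by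
  rw [vnorm_eq_norm, PiLp.toLp_single, PiLp.norm_single, norm_one]

section Tensor

variable {d : ℕ} {n : Fin d → ℕ}

lemma hsNorm_eq_norm (T : (∀ j, Fin (n j)) → 𝕜) :
    hsNorm T = ‖(WithLp.toLp 2 T : EuclideanSpace 𝕜 (∀ j, Fin (n j)))‖ := by
  rw [EuclideanSpace.norm_eq]; rfl

lemma hsNorm_nonneg (T : (∀ j, Fin (n j)) → 𝕜) : 0 ≤ hsNorm T := Real.sqrt_nonneg _

lemma hsNorm_smul (c : 𝕜) (T : (∀ j, Fin (n j)) → 𝕜) : hsNorm (c • T) = ‖c‖ * hsNorm T := by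
  simp only [hsNorm_eq_norm, WithLp.toLp_smul, norm_smul]

lemma hsNorm_eq_zero {T : (∀ j, Fin (n j)) → 𝕜} : hsNorm T = 0 ↔ T = 0 := by
  rw [hsNorm_eq_norm, norm_eq_zero, WithLp.toLp_eq_zero]

-- The arguments swap: Mathlib's `inner` is conjugate-linear in the first one, `tinner` in the second.
lemma tinner_eq_inner (T Y : (∀ j, Fin (n j)) → 𝕜) :
    tinner T Y =
      inner 𝕜 (WithLp.toLp 2 Y : EuclideanSpace 𝕜 (∀ j, Fin (n j))) (WithLp.toLp 2 T) := by
  simp [tinner, PiLp.inner_apply]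

lemma norm_tinner_le (T Y : (∀ j, Fin (n j)) → 𝕜) : ‖tinner T Y‖ ≤ hsNorm T * hsNorm Y := by
  rw [tinner_eq_inner, hsNorm_eq_norm, hsNorm_eq_norm, mul_comm]
  exact norm_inner_le_norm _ _

lemma tinner_smul_left (c : 𝕜) (T Y : (∀ j, Fin (n j)) → 𝕜) :
    tinner (c • T) Y = c * tinner T Y := by
  simp only [tinner_eq_inner, WithLp.toLp_smul, inner_smul_right]

lemma hsNorm_rankOne (x : ∀ j, Fin (n j) → 𝕜) : hsNorm (rankOne x) = ∏ j, vnorm (x j) := by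
  simp only [hsNorm, rankOne, vnorm, norm_prod, ← prod_pow]
  rw [← Real.sqrt_prod _ fun j _ => by positivity, Fintype.prod_sum]

lemma norm_tinner_rankOne_le_specNorm (T : (∀ j, Fin (n j)) → 𝕜) {x : ∀ j, Fin (n j) → 𝕜}
    (hx : ∀ j, vnorm (x j) = 1) : ‖tinner T (rankOne x)‖ ≤ specNorm T := by
  refine le_csSup ⟨hsNorm T, ?_⟩ ⟨x, hx, rfl⟩
  rintro _ ⟨y, hy, rfl⟩
  simpa [hsNorm_rankOne, hy] using norm_tinner_le T (rankOne y)

lemma specNorm_nonneg (T : (∀ j, Fin (n j)) → 𝕜) : 0 ≤ specNorm T :=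
  Real.sSup_nonneg <| by rintro _ ⟨x, -, rfl⟩; exact norm_nonneg _

lemma specNorm_le {T : (∀ j, Fin (n j)) → 𝕜} {c : ℝ}
    (h : ∀ x : ∀ j, Fin (n j) → 𝕜, (∀ j, vnorm (x j) = 1) → ‖tinner T (rankOne x)‖ ≤ c)
    (hc : 0 ≤ c) : specNorm T ≤ c :=
  Real.sSup_le (by rintro _ ⟨x, hx, rfl⟩; exact h x hx) hc

lemma specNorm_smul (c : 𝕜) (T : (∀ j, Fin (n j)) → 𝕜) : specNorm (c • T) = ‖c‖ * specNorm T := by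
  simp only [specNorm, tinner_smul_left, norm_mul]
  rw [← smul_eq_mul, ← Real.sSup_smul_of_nonneg (norm_nonneg c)]
  congr 1
  ext r
  simp [Set.mem_smul_set, eq_comm]

def nucCosts (T : (∀ j, Fin (n j)) → 𝕜) : Set ℝ :=
  {r : ℝ | ∃ (m : ℕ) (x : Fin m → ∀ j, Fin (n j) → 𝕜),
    T = (∑ i, rankOne (x i)) ∧ r = ∑ i, ∏ j, vnorm (x i j)}

lemma nucNorm_eq_sInf (T : (∀ j, Fin (n j)) → 𝕜) : nucNorm T = sInf (nucCosts T) := rfl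

lemma nucCosts_bddBelow (T : (∀ j, Fin (n j)) → 𝕜) : BddBelow (nucCosts T) :=
  ⟨0, by rintro _ ⟨m, x, -, rfl⟩; exact sum_nonneg fun i _ => prod_nonneg fun j _ => vnorm_nonneg _⟩

lemma nucNorm_nonneg (T : (∀ j, Fin (n j)) → 𝕜) : 0 ≤ nucNorm T :=
  Real.sInf_nonneg <| by
    rintro _ ⟨m, x, -, rfl⟩; exact sum_nonneg fun i _ => prod_nonneg fun j _ => vnorm_nonneg _

lemma nucNorm_zero : nucNorm (0 : (∀ j, Fin (n j)) → 𝕜) = 0 :=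
  le_antisymm (csInf_le (nucCosts_bddBelow _) ⟨0, Fin.elim0, by simp, by simp⟩) (nucNorm_nonneg _)

lemma rankOne_update_smul (x : ∀ j, Fin (n j) → 𝕜) (j₀ : Fin d) (c : 𝕜) :
    rankOne (Function.update x j₀ (c • x j₀)) = c • rankOne x := by
  funext i
  simp only [rankOne, Function.apply_update (fun j (v : Fin (n j) → 𝕜) => v (i j)),
    prod_update_of_mem (mem_univ j₀), Pi.smul_apply, smul_eq_mul, mul_assoc]
  rw [← prod_eq_mul_prod_sdiff_singleton_of_mem (mem_univ j₀) fun j => x j (i j)]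

lemma prod_vnorm_update_smul (x : ∀ j, Fin (n j) → 𝕜) (j₀ : Fin d) (c : 𝕜) :
    ∏ j, vnorm (Function.update x j₀ (c • x j₀) j) = ‖c‖ * ∏ j, vnorm (x j) := by
  simp only [Function.apply_update (fun _ => vnorm), prod_update_of_mem (mem_univ j₀), vnorm_smul,
    mul_assoc]
  rw [← prod_eq_mul_prod_sdiff_singleton_of_mem (mem_univ j₀) fun j => vnorm (x j)]

lemma smul_mem_nucCosts [NeZero d] {T : (∀ j, Fin (n j)) → 𝕜} {r : ℝ} (hr : r ∈ nucCosts T)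
    (c : 𝕜) : ‖c‖ * r ∈ nucCosts (c • T) := by
  obtain ⟨m, x, rfl, rfl⟩ := hr
  refine ⟨m, fun i => Function.update (x i) 0 (c • x i 0), ?_, ?_⟩
  · simp only [rankOne_update_smul, smul_sum]
  · simp only [prod_vnorm_update_smul, mul_sum]

lemma add_mem_nucCosts {A B : (∀ j, Fin (n j)) → 𝕜} {r s : ℝ} (hr : r ∈ nucCosts A)
    (hs : s ∈ nucCosts B) : r + s ∈ nucCosts (A + B) := by
  obtain ⟨m, x, rfl, rfl⟩ := hr
  obtain ⟨m', x', rfl, rfl⟩ := hs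
  exact ⟨m + m', Fin.append x x', by simp [Fin.sum_univ_add], by simp [Fin.sum_univ_add]⟩

lemma rankOne_single (b : ∀ j, Fin (n j)) :
    rankOne (n := n) (fun j => Pi.single (b j) (1 : 𝕜)) = Pi.single b 1 := by
  funext i
  simp [rankOne, Pi.single_apply, prod_ite_zero, funext_iff]

lemma sum_norm_mem_nucCosts [NeZero d] (T : (∀ j, Fin (n j)) → 𝕜) :
    ∑ b, ‖T b‖ ∈ nucCosts T := by
  let e := (Fintype.equivFin (∀ j, Fin (n j))).symm
  let x : ∀ b : ∀ j, Fin (n j), ∀ j, Fin (n j) → 𝕜 := fun b j => Pi.single (b j) 1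
  refine ⟨_, fun i => Function.update (x (e i)) 0 (T (e i) • x (e i) 0), ?_, ?_⟩
  · simp only [rankOne_update_smul, x, rankOne_single]
    rw [e.sum_comp fun b => T b • Pi.single b 1]
    simp only [← Pi.single_smul, smul_eq_mul, mul_one, univ_sum_single]
  · simp only [prod_vnorm_update_smul, x, vnorm_single, prod_const_one, mul_one]
    exact (e.sum_comp fun b => ‖T b‖).symm

lemma nucCosts_nonempty [NeZero d] (T : (∀ j, Fin (n j)) → 𝕜) : (nucCosts T).Nonempty :=
  ⟨_, sum_norm_mem_nucCosts T⟩

lemma nucNorm_le_sum_norm [NeZero d] (T : (∀ j, Fin (n j)) → 𝕜) : nucNorm T ≤ ∑ b, ‖T b‖ :=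
  csInf_le (nucCosts_bddBelow T) (sum_norm_mem_nucCosts T)

lemma nucNorm_smul_le [NeZero d] (c : 𝕜) (T : (∀ j, Fin (n j)) → 𝕜) :
    nucNorm (c • T) ≤ ‖c‖ * nucNorm T := by
  rw [nucNorm_eq_sInf, nucNorm_eq_sInf, ← smul_eq_mul, ← Real.sInf_smul_of_nonneg (norm_nonneg c)]
  refine csInf_le_csInf (nucCosts_bddBelow _) ((nucCosts_nonempty T).smul_set) ?_
  exact Set.smul_set_subset_iff.2 fun r hr => smul_mem_nucCosts hr c

lemma nucNorm_add_le [NeZero d] (A B : (∀ j, Fin (n j)) → 𝕜) :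
    nucNorm (A + B) ≤ nucNorm A + nucNorm B := by
  rw [nucNorm_eq_sInf, nucNorm_eq_sInf, nucNorm_eq_sInf, ← csInf_add (nucCosts_nonempty A)
    (nucCosts_bddBelow A) (nucCosts_nonempty B) (nucCosts_bddBelow B)]
  refine csInf_le_csInf (nucCosts_bddBelow _) ((nucCosts_nonempty A).add (nucCosts_nonempty B)) ?_
  exact Set.add_subset_iff.2 fun r hr s hs => add_mem_nucCosts hr hs

lemma nucNorm_sum_le [NeZero d] {ι : Type*} (s : Finset ι) (A : ι → (∀ j, Fin (n j)) → 𝕜) :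
    nucNorm (∑ k ∈ s, A k) ≤ ∑ k ∈ s, nucNorm (A k) :=
  le_sum_of_subadditive (M := (∀ j, Fin (n j)) → 𝕜) nucNorm nucNorm_zero.le nucNorm_add_le s A

lemma exists_hsNorm_eq_one_smul {S : (∀ j, Fin (n j)) → 𝕜} (hS : S ≠ 0) :
    ∃ U, hsNorm U = 1 ∧ S = (hsNorm S : 𝕜) • U := by
  have hc : 0 < hsNorm S := (hsNorm_nonneg S).lt_of_ne' (hsNorm_eq_zero.not.2 hS)
  refine ⟨(hsNorm S : 𝕜)⁻¹ • S, ?_, ?_⟩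
  · rw [hsNorm_smul, norm_inv, RCLike.norm_ofReal, abs_of_pos hc, inv_mul_cancel₀ hc.ne']
  · rw [smul_inv_smul₀ (RCLike.ofReal_ne_zero.2 hc.ne')]

lemma norm_ofReal_hsNorm (S : (∀ j, Fin (n j)) → 𝕜) : ‖(hsNorm S : 𝕜)‖ = hsNorm S := by
  rw [RCLike.norm_ofReal, abs_of_nonneg (hsNorm_nonneg S)]

lemma bddAbove_nucNorm_unit_sphere [NeZero d] :
    BddAbove {r : ℝ | ∃ T : (∀ j, Fin (n j)) → 𝕜, hsNorm T = 1 ∧ r = nucNorm T} := by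
  refine ⟨Fintype.card (∀ j, Fin (n j)), ?_⟩
  rintro _ ⟨T, hT, rfl⟩
  calc nucNorm T ≤ ∑ b, ‖T b‖ := nucNorm_le_sum_norm T
    _ ≤ ∑ _b : ∀ j, Fin (n j), hsNorm T := by
      gcongr with b
      rw [hsNorm_eq_norm]
      exact PiLp.norm_apply_le (WithLp.toLp 2 T : EuclideanSpace 𝕜 _) b
    _ = Fintype.card (∀ j, Fin (n j)) := by simp [hT]

lemma nucNorm_le_alphaN_mul_hsNorm [NeZero d] (S : (∀ j, Fin (n j)) → 𝕜) :
    nucNorm S ≤ alphaN 𝕜 d n * hsNorm S := by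
  rcases eq_or_ne S 0 with rfl | hS
  · rw [nucNorm_zero, hsNorm_eq_zero.2 rfl, mul_zero]
  obtain ⟨U, hU, hSU⟩ := exists_hsNorm_eq_one_smul hS
  calc nucNorm S ≤ hsNorm S * nucNorm U := by
        conv_lhs => rw [hSU]
        simpa only [norm_ofReal_hsNorm] using nucNorm_smul_le (hsNorm S : 𝕜) U
    _ ≤ hsNorm S * alphaN 𝕜 d n := by
        gcongr
        · exact hsNorm_nonneg S
        · exact le_csSup bddAbove_nucNorm_unit_sphere ⟨U, hU, rfl⟩
    _ = alphaN 𝕜 d n * hsNorm S := mul_comm _ _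

lemma betaN_mul_hsNorm_le_specNorm (S : (∀ j, Fin (n j)) → 𝕜) :
    betaN 𝕜 d n * hsNorm S ≤ specNorm S := by
  rcases eq_or_ne S 0 with rfl | hS
  · rw [hsNorm_eq_zero.2 rfl, mul_zero]
    exact specNorm_nonneg _
  obtain ⟨U, hU, hSU⟩ := exists_hsNorm_eq_one_smul hS
  have hβ : betaN 𝕜 d n ≤ specNorm U :=
    csInf_le ⟨0, by rintro _ ⟨T, -, rfl⟩; exact specNorm_nonneg T⟩ ⟨U, hU, rfl⟩
  calc betaN 𝕜 d n * hsNorm S ≤ hsNorm S * specNorm U := by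
        rw [mul_comm]; exact mul_le_mul_of_nonneg_left hβ (hsNorm_nonneg S)
    _ = specNorm S := by
        conv_rhs => rw [hSU]
        rw [specNorm_smul, norm_ofReal_hsNorm]

end Tensor

section LastMode

variable {d : ℕ} {N : Fin (d + 1) → ℕ}

def sliceLast (T : (∀ j, Fin (N j)) → 𝕜) (k : Fin (N (Fin.last d))) :
    (∀ j : Fin d, Fin (N j.castSucc)) → 𝕜 :=
  fun i => T (Fin.snoc i k)

def extendLast (S : (∀ j : Fin d, Fin (N j.castSucc)) → 𝕜) (k : Fin (N (Fin.last d))) :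
    (∀ j, Fin (N j)) → 𝕜 :=
  fun b => if b (Fin.last d) = k then S (Fin.init b) else 0

lemma sum_eq_sum_sum_snoc {M : Type*} [AddCommMonoid M] (f : (∀ j, Fin (N j)) → M) :
    ∑ b, f b = ∑ k, ∑ i : ∀ j : Fin d, Fin (N j.castSucc), f (Fin.snoc i k) := by
  rw [← (Fin.snocEquiv fun j => Fin (N j)).sum_comp f, Fintype.sum_prod_type]
  rfl

lemma hsNorm_sq_eq_sum_sliceLast (T : (∀ j, Fin (N j)) → 𝕜) :
    hsNorm T ^ 2 = ∑ k, hsNorm (sliceLast T k) ^ 2 := by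
  simp only [hsNorm, Real.sq_sqrt (sum_nonneg fun _ _ => sq_nonneg _)]
  exact sum_eq_sum_sum_snoc _

lemma tinner_extendLast (T : (∀ j, Fin (N j)) → 𝕜) (S : (∀ j : Fin d, Fin (N j.castSucc)) → 𝕜)
    (k : Fin (N (Fin.last d))) : tinner T (extendLast S k) = tinner (sliceLast T k) S := by
  rw [tinner, sum_eq_sum_sum_snoc]
  simp [extendLast, sliceLast, tinner, apply_ite]

lemma extendLast_sum {ι : Type*} (s : Finset ι) (S : ι → (∀ j : Fin d, Fin (N j.castSucc)) → 𝕜)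
    (k : Fin (N (Fin.last d))) : extendLast (∑ i ∈ s, S i) k = ∑ i ∈ s, extendLast (S i) k := by
  funext b
  simp only [extendLast, Finset.sum_apply]
  split_ifs <;> simp

lemma rankOne_snoc_single (x : ∀ j : Fin d, Fin (N j.castSucc) → 𝕜) (k : Fin (N (Fin.last d))) :
    rankOne (n := N) (Fin.snoc x (Pi.single k 1)) = extendLast (rankOne x) k := by
  funext b
  simp only [rankOne, extendLast, Fin.prod_univ_castSucc, Fin.snoc_castSucc, Fin.snoc_last,
    Pi.single_apply, mul_ite, mul_one, mul_zero]
  rfl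

lemma vnorm_snoc_single {x : ∀ j : Fin d, Fin (N j.castSucc) → 𝕜} (hx : ∀ j, vnorm (x j) = 1)
    (k : Fin (N (Fin.last d))) (j : Fin (d + 1)) :
    vnorm (Fin.snoc (α := fun j => Fin (N j) → 𝕜) x (Pi.single k 1) j) = 1 := by
  induction j using Fin.lastCases with
  | last => rw [Fin.snoc_last, vnorm_single]
  | cast j => rw [Fin.snoc_castSucc, hx j]

lemma eq_sum_extendLast_sliceLast (T : (∀ j, Fin (N j)) → 𝕜) :
    T = ∑ k, extendLast (sliceLast T k) k := by
  funext b
  simp [extendLast, sliceLast, Finset.sum_apply]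

lemma specNorm_sliceLast_le (T : (∀ j, Fin (N j)) → 𝕜) (k : Fin (N (Fin.last d))) :
    specNorm (sliceLast T k) ≤ specNorm T :=
  specNorm_le (fun x hx => by
    rw [← tinner_extendLast, ← rankOne_snoc_single]
    exact norm_tinner_rankOne_le_specNorm T (vnorm_snoc_single hx k)) (specNorm_nonneg T)

lemma nucNorm_extendLast_le [NeZero d] (S : (∀ j : Fin d, Fin (N j.castSucc)) → 𝕜)
    (k : Fin (N (Fin.last d))) : nucNorm (extendLast S k) ≤ nucNorm S := by
  refine csInf_le_csInf (nucCosts_bddBelow _) (nucCosts_nonempty S) ?_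
  rintro _ ⟨m, x, rfl, rfl⟩
  refine ⟨m, fun i => Fin.snoc (x i) (Pi.single k 1), ?_, ?_⟩
  · simp only [rankOne_snoc_single, extendLast_sum]
  · simp only [Fin.prod_univ_castSucc, Fin.snoc_castSucc, Fin.snoc_last, vnorm_single, mul_one]

lemma exists_hsNorm_le_sqrt_mul_hsNorm_sliceLast (T : (∀ j, Fin (N j)) → 𝕜)
    (hN : 0 < N (Fin.last d)) :
    ∃ k, hsNorm T ≤ √(N (Fin.last d)) * hsNorm (sliceLast T k) := by
  obtain ⟨k, -, hk⟩ := exists_max_image univ (fun k => hsNorm (sliceLast T k))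
    ⟨⟨0, hN⟩, mem_univ _⟩
  refine ⟨k, (pow_le_pow_iff_left₀ (hsNorm_nonneg T)
    (mul_nonneg (Real.sqrt_nonneg _) (hsNorm_nonneg _)) two_ne_zero).1 ?_⟩
  calc hsNorm T ^ 2 = ∑ k, hsNorm (sliceLast T k) ^ 2 := hsNorm_sq_eq_sum_sliceLast T
    _ ≤ ∑ _k : Fin (N (Fin.last d)), hsNorm (sliceLast T k) ^ 2 := by
        gcongr with k' _
        · exact hsNorm_nonneg _
        · exact hk k' (mem_univ _)
    _ = (√(N (Fin.last d)) * hsNorm (sliceLast T k)) ^ 2 := by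
        rw [sum_const, card_univ, Fintype.card_fin, nsmul_eq_mul, mul_pow,
          Real.sq_sqrt (by positivity)]

lemma sum_hsNorm_sliceLast_le (T : (∀ j, Fin (N j)) → 𝕜) :
    ∑ k, hsNorm (sliceLast T k) ≤ √(N (Fin.last d)) * hsNorm T := by
  refine (pow_le_pow_iff_left₀ (sum_nonneg fun k _ => hsNorm_nonneg _)
    (mul_nonneg (Real.sqrt_nonneg _) (hsNorm_nonneg T)) two_ne_zero).1 ?_
  calc (∑ k, hsNorm (sliceLast T k)) ^ 2
      ≤ (univ : Finset (Fin (N (Fin.last d)))).card * ∑ k, hsNorm (sliceLast T k) ^ 2 :=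
        sq_sum_le_card_mul_sum_sq
    _ = (√(N (Fin.last d)) * hsNorm T) ^ 2 := by
        rw [← hsNorm_sq_eq_sum_sliceLast, card_univ, Fintype.card_fin, mul_pow,
          Real.sq_sqrt (by positivity)]

lemma betaN_mul_hsNorm_le_sqrt_mul_specNorm (T : (∀ j, Fin (N j)) → 𝕜) (hN : 0 < N (Fin.last d)) :
    betaN 𝕜 d (N ∘ Fin.castSucc) * hsNorm T ≤ √(N (Fin.last d)) * specNorm T := by
  obtain ⟨k, hk⟩ := exists_hsNorm_le_sqrt_mul_hsNorm_sliceLast T hN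
  have hβ : 0 ≤ betaN 𝕜 d (N ∘ Fin.castSucc) :=
    Real.sInf_nonneg <| by rintro _ ⟨S, -, rfl⟩; exact specNorm_nonneg S
  calc betaN 𝕜 d (N ∘ Fin.castSucc) * hsNorm T
      ≤ betaN 𝕜 d (N ∘ Fin.castSucc) * (√(N (Fin.last d)) * hsNorm (sliceLast T k)) := by gcongr
    _ = √(N (Fin.last d)) * (betaN 𝕜 d (N ∘ Fin.castSucc) * hsNorm (sliceLast T k)) := by ring
    _ ≤ √(N (Fin.last d)) * specNorm T := by
        gcongr
        exact (betaN_mul_hsNorm_le_specNorm _).trans (specNorm_sliceLast_le T k)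

lemma nucNorm_le_sqrt_mul_alphaN_mul_hsNorm [NeZero d] (T : (∀ j, Fin (N j)) → 𝕜) :
    nucNorm T ≤ √(N (Fin.last d)) * alphaN 𝕜 d (N ∘ Fin.castSucc) * hsNorm T := by
  have hα : 0 ≤ alphaN 𝕜 d (N ∘ Fin.castSucc) :=
    Real.sSup_nonneg <| by rintro _ ⟨S, -, rfl⟩; exact nucNorm_nonneg S
  calc nucNorm T = nucNorm (∑ k, extendLast (sliceLast T k) k) := by
        rw [← eq_sum_extendLast_sliceLast]
    _ ≤ ∑ k, nucNorm (sliceLast T k) :=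
        (nucNorm_sum_le _ _).trans (sum_le_sum fun k _ => nucNorm_extendLast_le _ k)
    _ ≤ ∑ k, alphaN 𝕜 d (N ∘ Fin.castSucc) * hsNorm (sliceLast T k) :=
        sum_le_sum fun k _ => nucNorm_le_alphaN_mul_hsNorm _
    _ ≤ alphaN 𝕜 d (N ∘ Fin.castSucc) * (√(N (Fin.last d)) * hsNorm T) := by
        rw [← mul_sum]
        exact mul_le_mul_of_nonneg_left (sum_hsNorm_sliceLast_le T) hα
    _ = √(N (Fin.last d)) * alphaN 𝕜 d (N ∘ Fin.castSucc) * hsNorm T := by ring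

end LastMode

end

/-- `β((n₁,…,n_{d+1}),𝕜) ≥ β((n₁,…,n_d),𝕜)/√(n_{d+1})` and
`α((n₁,…,n_{d+1}),𝕜) ≤ √(n_{d+1})·α((n₁,…,n_d),𝕜)`. -/
theorem stmt14 (𝕜 : Type*) [RCLike 𝕜] (d : ℕ) (hd : 1 ≤ d) (n : Fin (d + 1) → ℕ)
    (hn : ∀ j, 1 ≤ n j) :
    betaN 𝕜 (d + 1) n ≥
      betaN 𝕜 d (n ∘ Fin.castSucc) / Real.sqrt (n (Fin.last d)) ∧
    alphaN 𝕜 (d + 1) n ≤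
      Real.sqrt (n (Fin.last d)) * alphaN 𝕜 d (n ∘ Fin.castSucc) := by
  have : NeZero d := ⟨by omega⟩
  have hν : 0 < √(n (Fin.last d)) := Real.sqrt_pos.2 (by exact_mod_cast hn (Fin.last d))
  have hT₀ : hsNorm (rankOne (n := n) fun j => Pi.single (⟨0, hn j⟩ : Fin (n j)) (1 : 𝕜)) = 1 := by
    simp [hsNorm_rankOne, vnorm_single]
  constructor
  · refine le_csInf ⟨_, _, hT₀, rfl⟩ ?_
    rintro _ ⟨T, hT, rfl⟩
    rw [div_le_iff₀' hν]
    simpa [hT] using betaN_mul_hsNorm_le_sqrt_mul_specNorm T (hn (Fin.last d))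
  · refine csSup_le ⟨_, _, hT₀, rfl⟩ ?_
    rintro _ ⟨T, hT, rfl⟩
    simpa [hT] using nucNorm_le_sqrt_mul_alphaN_mul_hsNorm T
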